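/- arXiv:1002.2936 — 2 statements merged into one kernel-verified Lean document; each statement's English description precedes it below -/
import Mathlib

section
/- Let f : A → B be a surjective homomorphism of abelian groups whose kernel C is a finite pure subgroup of A. Then f splits, i.e., there exists a subgroup A' of A with A = C ⊕ A', so that f restricted to A' is an isomorphism onto B. -/
lemma baer_zmod (m : ℕ) [NeZero m] : Module.Baer (ZMod m) (ZMod m) := by
  intro I g
  set J : Ideal ℤ := I.comap (Int.castRingHom (ZMod m)) with hJ
  obtain ⟨k, hk⟩ := (IsPrincipalIdealRing.principal J).principal
  have hmemJ : ∀ x : ℤ, x ∈ J ↔ k ∣ x := by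
    intro x
    rw [hk, Submodule.mem_span_singleton]
    constructor
    · rintro ⟨a, rfl⟩; exact ⟨a, by rw [smul_eq_mul, mul_comm]⟩
    · rintro ⟨a, rfl⟩; exact ⟨a, by rw [smul_eq_mul, mul_comm]⟩
  have hmemI : ∀ x : ℤ, ((x : ZMod m) ∈ I) ↔ k ∣ x := by
    intro x; rw [← hmemJ, hJ, Ideal.mem_comap]; rfl
  have hmJ : k ∣ (m : ℤ) := by
    rw [← hmemI]; simp only [Int.cast_natCast, ZMod.natCast_self]; exact I.zero_mem
  have hk0 : k ≠ 0 := by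
    rintro rfl
    rw [zero_dvd_iff] at hmJ
    exact NeZero.ne m (by exact_mod_cast hmJ)
  set K := k.natAbs with hKdef
  have hKm : K ∣ m := by
    have := Int.natAbs_dvd_natAbs.mpr hmJ
    simpa using this
  have hK0 : K ≠ 0 := Int.natAbs_ne_zero.mpr hk0
  have hKI : ((K : ℕ) : ZMod m) ∈ I := by
    have : ((K : ℤ) : ZMod m) ∈ I := by
      rw [hmemI]; exact Int.dvd_natAbs.mpr dvd_rfl
    simpa using this
  set x := g ⟨((K : ℕ) : ZMod m), hKI⟩ with hx
  have h1 : ((m / K : ℕ) : ZMod m) * x = 0 := by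
    have e : ((m / K : ℕ) : ZMod m) • (⟨((K:ℕ) : ZMod m), hKI⟩ : I) = (0 : I) := by
      apply Subtype.ext
      show ((m / K : ℕ) : ZMod m) • ((K:ℕ) : ZMod m) = 0
      rw [smul_eq_mul, ← Nat.cast_mul, Nat.div_mul_cancel hKm, ZMod.natCast_self]
    calc ((m / K : ℕ) : ZMod m) * x = g (((m / K : ℕ) : ZMod m) • ⟨((K:ℕ) : ZMod m), hKI⟩) := by
          rw [map_smul, smul_eq_mul]
      _ = 0 := by rw [e, map_zero]
  have h2 : K ∣ x.val := by
    have hxcast : (((m/K) * x.val : ℕ) : ZMod m) = 0 := by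
      push_cast
      rw [ZMod.natCast_val, ZMod.cast_id]
      exact h1
    rw [ZMod.natCast_eq_zero_iff] at hxcast
    have hxcast' : (m / K * K) ∣ m / K * x.val := by
      rw [Nat.div_mul_cancel hKm]
      exact hxcast
    have hq : 0 < m / K := Nat.div_pos (Nat.le_of_dvd (Nat.pos_of_ne_zero (NeZero.ne m)) hKm) (Nat.pos_of_ne_zero hK0)
    exact (Nat.mul_dvd_mul_iff_left hq).mp hxcast'
  obtain ⟨w, hw⟩ := h2
  refine ⟨LinearMap.toSpanSingleton (ZMod m) (ZMod m) ((w : ℕ) : ZMod m), ?_⟩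
  intro s hs
  obtain ⟨u, hu⟩ : ∃ u : ZMod m, s = u * ((K:ℕ) : ZMod m) := by
    obtain ⟨t, rfl⟩ := ZMod.intCast_surjective (n := m) s
    obtain ⟨a, rfl⟩ := (hmemI t).mp hs
    rcases Int.natAbs_eq k with h | h
    · refine ⟨(a : ZMod m), ?_⟩
      rw [h, ← hKdef]; push_cast; ring
    · refine ⟨(-a : ZMod m), ?_⟩
      rw [h, ← hKdef]; push_cast; ring
  have hgs : g ⟨s, hs⟩ = u * x := by
    have e : (⟨s, hs⟩ : I) = u • ⟨((K:ℕ) : ZMod m), hKI⟩ := by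
      apply Subtype.ext
      show s = u • ((K:ℕ) : ZMod m)
      rw [smul_eq_mul]; exact hu
    rw [e, map_smul, smul_eq_mul]
  show s • ((w : ℕ) : ZMod m) = g ⟨s, hs⟩
  rw [smul_eq_mul, hgs, hu]
  have hxval : x = ((K * w : ℕ) : ZMod m) := by rw [← hw, ZMod.natCast_val, ZMod.cast_id]
  rw [hxval]
  push_cast
  ring



lemma exists_phi (m : ℕ) [NeZero m] (Q : Type) [AddCommGroup Q] [Module (ZMod m) Q]
    (q : Q) (hq : ∀ j : ℕ, j • q = 0 → m ∣ j) : ∃ φ : Q →+ ZMod m, φ q = 1 := by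
  set ψ : ZMod m →ₗ[ZMod m] Q := LinearMap.toSpanSingleton (ZMod m) Q q with hψ
  have hψinj : Function.Injective ⇑ψ := by
    rw [injective_iff_map_eq_zero]
    intro z hz
    have h1 : ((z.val : ℕ) : ZMod m) • q = 0 := by
      rw [ZMod.natCast_val, ZMod.cast_id]
      simpa [hψ, LinearMap.toSpanSingleton_apply] using hz
    rw [Nat.cast_smul_eq_nsmul] at h1
    have h3 : z.val = 0 := Nat.eq_zero_of_dvd_of_lt (hq z.val h1) (ZMod.val_lt z)
    rwa [← ZMod.val_eq_zero]
  obtain ⟨φ, hφ⟩ := ((baer_zmod m).injective).out ψ hψinj LinearMap.id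
  refine ⟨φ.toAddMonoidHom, ?_⟩
  have := hφ 1
  rwa [hψ, LinearMap.toSpanSingleton_apply, one_smul, LinearMap.id_apply] at this

lemma retraction_exists (N : ℕ) : ∀ (A : Type) [AddCommGroup A] (C : AddSubgroup A),
    Finite C → Nat.card C ≤ N →
    (∀ n : ℕ, ∀ c ∈ C, (∃ a : A, n • a = c) → ∃ c' ∈ C, n • c' = c) →
    ∃ r : A →+ A, (∀ a, r a ∈ C) ∧ ∀ x ∈ C, r x = x := by
  induction N with
  | zero =>
    intro A _ C hfin hcard hpure
    haveI : Nonempty C := ⟨⟨0, C.zero_mem⟩⟩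
    have : 0 < Nat.card C := Nat.card_pos
    omega
  | succ N ih =>
    intro A _ C hfin hcard hpure
    by_cases htriv : ∀ x ∈ C, x = (0 : A)
    · refine ⟨0, fun a => ?_, fun x hx => ?_⟩
      · simpa using C.zero_mem
      · simpa using (htriv x hx).symm
    push_neg at htriv
    obtain ⟨x₀, hx₀C, hx₀⟩ := htriv
    set m := AddMonoid.exponent C with hmdef
    have hexp : AddMonoid.ExponentExists ↥C := AddMonoid.ExponentExists.of_finite
    obtain ⟨c₀, hc₀⟩ := AddMonoid.exists_addOrderOf_eq_exponent hexp
    set c : A := (c₀ : A) with hcdef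
    have hcC : c ∈ C := c₀.2
    have hordc : addOrderOf c = m := by
      rw [hmdef, ← hc₀]
      exact addOrderOf_injective C.subtype Subtype.coe_injective c₀
    have hm0 : m ≠ 0 := hexp.exponent_ne_zero
    have hmC : ∀ x ∈ C, m • x = 0 := by
      intro x hx
      have h := AddMonoid.exponent_nsmul_eq_zero (⟨x, hx⟩ : C)
      have := congrArg (Subtype.val) h
      simpa using this
    have hm1 : m ≠ 1 := by
      intro h
      apply hx₀
      have := hmC x₀ hx₀C
      rwa [h, one_nsmul] at this
    haveI : NeZero m := ⟨hm0⟩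
    haveI : Fact (1 < m) := ⟨by omega⟩
    -- the subgroup m • A and the quotient
    set μ : A →+ A := AddMonoidHom.mk' (fun a : A => m • a) (fun a b => smul_add m a b) with hμ
    set M : AddSubgroup A := μ.range with hMdef
    have hMmem : ∀ x : A, m • x ∈ M := fun x => ⟨x, rfl⟩
    set π : A →+ A ⧸ M := QuotientAddGroup.mk' M with hπ
    have hordπc : ∀ j : ℕ, j • π c = 0 → m ∣ j := by
      intro j hj
      have hjM : j • c ∈ M := by
        have hj' : π (j • c) = 0 := by rw [map_nsmul]; exact hj
        exact (QuotientAddGroup.eq_zero_iff (j • c)).mp hj'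
      obtain ⟨a, ha⟩ := hjM
      obtain ⟨y, hyC, hy⟩ := hpure m (j • c) (AddSubgroup.nsmul_mem C hcC j) ⟨a, ha⟩
      have hzero : j • c = 0 := by rw [← hy, hmC y hyC]
      have := addOrderOf_dvd_of_nsmul_eq_zero hzero
      rwa [hordc] at this
    obtain ⟨φ, hφc⟩ := @exists_phi m ⟨hm0⟩ (A ⧸ M) _ (QuotientAddGroup.zmodModule hMmem) (π c) hordπc
    have hmc0 : m • c = 0 := by rw [← hordc]; exact addOrderOf_nsmul_eq_zero c
    have hmodc : ∀ k : ℕ, (k % m) • c = k • c := by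
      intro k
      conv_rhs => rw [← Nat.mod_add_div k m]
      rw [add_nsmul, mul_nsmul c m (k / m), hmc0, smul_zero, add_zero]
    set r₁ : A →+ A := AddMonoidHom.mk' (fun a => (φ (π a)).val • c) (by
      intro a b
      show (φ (π (a + b))).val • c = (φ (π a)).val • c + (φ (π b)).val • c
      rw [map_add, map_add, ZMod.val_add]
      rw [hmodc, add_nsmul]) with hr₁
    have hr₁def : ∀ a, r₁ a = (φ (π a)).val • c := fun a => rfl
    have hr₁C : ∀ a, r₁ a ∈ C := fun a => AddSubgroup.nsmul_mem C hcC _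
    have hr₁c : r₁ c = c := by
      rw [hr₁def, hφc, ZMod.val_one, one_nsmul]
    have hr₁idem : ∀ a, r₁ (r₁ a) = r₁ a := by
      intro a
      rw [hr₁def a, map_nsmul, hr₁c]
    -- the complement of ⟨c⟩ and the smaller subgroup
    set A₁ : AddSubgroup A := r₁.ker with hA₁
    have hmemA₁ : ∀ a : A, a - r₁ a ∈ A₁ := by
      intro a
      rw [AddMonoidHom.mem_ker, map_sub, hr₁idem, sub_self]
    set C₁ : AddSubgroup ↥A₁ := C.comap A₁.subtype with hC₁
    have hC₁mem : ∀ x : ↥A₁, x ∈ C₁ ↔ (x : A) ∈ C := fun x => Iff.rfl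
    -- injection C₁ → C
    set ι : ↥C₁ → ↥C := fun x => ⟨((x : ↥A₁) : A), x.2⟩ with hι
    have hιinj : Function.Injective ι := by
      intro x y hxy
      have h := congrArg (fun t : ↥C => (t : A)) hxy
      apply Subtype.ext; apply Subtype.ext
      exact h
    haveI : Finite ↥C₁ := Finite.of_injective ι hιinj
    have hcnot : ¬ ∃ x : ↥C₁, ι x = ⟨c, hcC⟩ := by
      rintro ⟨x, hx⟩
      have h1 : ((x : ↥A₁) : A) = c := congrArg Subtype.val hx
      have h2 : r₁ ((x : ↥A₁) : A) = 0 := (x : ↥A₁).2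
      rw [h1, hr₁c] at h2
      have : addOrderOf c = 1 := by rw [h2]; simp
      rw [hordc] at this
      omega
    have hcardlt : Nat.card ↥C₁ < Nat.card ↥C := by
      have hle : Nat.card ↥C₁ ≤ Nat.card ↥C := Nat.card_le_card_of_injective ι hιinj
      rcases lt_or_eq_of_le hle with h | h
      · exact h
      · exfalso
        have hbij : Function.Bijective ι := (Nat.bijective_iff_injective_and_card ι).mpr ⟨hιinj, h⟩
        exact hcnot (hbij.2 ⟨c, hcC⟩)
    -- purity of C₁ in A₁
    have hpure₁ : ∀ n : ℕ, ∀ x ∈ C₁, (∃ a : ↥A₁, n • a = x) → ∃ y ∈ C₁, n • y = x := by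
      intro n x hx ⟨a, ha⟩
      have hxC : (x : A) ∈ C := hx
      have hxA : (n : ℕ) • (a : A) = (x : A) := by
        rw [← ha]; rfl
      obtain ⟨z, hzC, hz⟩ := hpure n (x : A) hxC ⟨(a : A), hxA⟩
      set z₁ : A := z - r₁ z with hz₁
      have hz₁C : z₁ ∈ C := C.sub_mem hzC (hr₁C z)
      have hz₁A₁ : z₁ ∈ A₁ := hmemA₁ z
      refine ⟨⟨z₁, hz₁A₁⟩, hz₁C, ?_⟩
      apply Subtype.ext
      show n • z₁ = (x : A)
      have hrx : r₁ (x : A) = 0 := x.2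
      have : n • r₁ z = 0 := by rw [← map_nsmul, hz, hrx]
      rw [hz₁, smul_sub, this, sub_zero, hz]
    obtain ⟨r', hr'mem, hr'id⟩ := ih ↥A₁ C₁ inferInstance (by omega) hpure₁
    set σ : A →+ ↥A₁ := AddMonoidHom.mk' (fun a => ⟨a - r₁ a, hmemA₁ a⟩) (by
      intro a b
      apply Subtype.ext
      show (a + b) - r₁ (a + b) = (a - r₁ a) + (b - r₁ b)
      rw [map_add]; abel) with hσ
    refine ⟨r₁ + A₁.subtype.comp (r'.comp σ), fun a => ?_, fun x hx => ?_⟩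
    · show r₁ a + ((r' (σ a) : ↥A₁) : A) ∈ C
      exact C.add_mem (hr₁C a) (hr'mem (σ a))
    · show r₁ x + ((r' (σ x) : ↥A₁) : A) = x
      have hσx : σ x ∈ C₁ := by
        show (x - r₁ x) ∈ C
        exact C.sub_mem hx (hr₁C x)
      rw [hr'id (σ x) hσx]
      show r₁ x + (x - r₁ x) = x
      abel

/-- A surjective homomorphism of abelian groups whose kernel is a finite pure subgroup splits:
the kernel is a direct summand, and the map restricted to a complement is an isomorphism. -/
theorem stmt_9 {A B : Type} [AddCommGroup A] [AddCommGroup B] (f : A →+ B)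
    (hsurj : Function.Surjective f) (hfin : Finite f.ker)
    (hpure : ∀ n : ℕ, ∀ c ∈ f.ker, (∃ a : A, n • a = c) → ∃ c' ∈ f.ker, n • c' = c) :
    ∃ A' : AddSubgroup A, IsCompl f.ker A' ∧
      Function.Bijective (f.comp A'.subtype) := by
  obtain ⟨r, hrmem, hrid⟩ := retraction_exists (Nat.card f.ker) A f.ker hfin le_rfl hpure
  have hker : ∀ a : A, a - r a ∈ r.ker := by
    intro a
    rw [AddMonoidHom.mem_ker, map_sub, hrid (r a) (hrmem a), sub_self]
  refine ⟨r.ker, ⟨?_, ?_⟩, ?_, ?_⟩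
  · rw [AddSubgroup.disjoint_def]
    intro x hxf hxr
    rw [AddMonoidHom.mem_ker] at hxr
    rw [← hrid x hxf, hxr]
  · rw [codisjoint_iff, eq_top_iff]
    intro a _
    rw [AddSubgroup.mem_sup]
    exact ⟨r a, hrmem a, a - r a, hker a, by abel⟩
  · rw [injective_iff_map_eq_zero]
    intro x hx
    have hxf : (x : A) ∈ f.ker := hx
    have hxr : r (x : A) = 0 := x.2
    apply Subtype.ext
    rw [← hrid (x : A) hxf, hxr]
    rfl
  · intro b
    obtain ⟨a, ha⟩ := hsurj b
    refine ⟨⟨a - r a, hker a⟩, ?_⟩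
    show f (a - r a) = b
    have : f (r a) = 0 := hrmem a
    rw [map_sub, this, sub_zero, ha]
end

section
/- Let p be a prime, q a prime power coprime to p, and i ≥ 1. Let d be the multiplicative order of q^i modulo p^n for n ≥ 1 (equivalently, the degree of the extension of 𝔽_q generated by the i-th Tate twist of μ_{p^n}). The group G = ℤ/d acting on M = ℤ/p^n by multiplication by q^i is a faithful cyclic action, and if p is odd (or p = 2 and q^i ≢ −1 mod p^n with d ≠ 2 acting by −1), the norm map M_G → M^G, given by multiplication by 1 + q^i + q^{2i} + ⋯ + q^{(d−1)i}, is surjective onto M^G = {m : (q^i − 1)m = 0}. -/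
/-!
Write `A = q^i`. If `A ≡ 1 (mod p^n)` the norm is the identity, and if `p ∤ A - 1` the
invariants vanish. Otherwise lifting the exponent gives `v_p(A^{p^k} - 1) = c + k` for `k ≥ 1`,
with `c = v_p(A - 1)` for odd `p` and `c = v_2(A - 1) + v_2(A + 1) - 1` for `p = 2`; excluding
`q^i ≡ -1` is exactly what makes `c < n` when `p = 2`. Hence the order `d` of `A` is some `p^k`
with `c + k ≤ n`, so the norm `N = 1 + A + ⋯ + A^{d-1}` satisfies
`v_p(A - 1) + v_p(N) = v_p(A^d - 1) ≤ n`. Since an element of `ℤ/p^n` is a unit times a power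
of `p`, the annihilator `p^{n - v_p(A - 1)} ℤ/p^n` of `A - 1` then lies in `N ℤ/p^n`.
-/

open Finset

namespace ZMod

theorem natCast_eq_one_iff_dvd_sub_one {N A : ℕ} (hA : 1 ≤ A) :
    (A : ZMod N) = 1 ↔ N ∣ A - 1 := by
  rw [← Nat.cast_one (R := ZMod N), natCast_eq_natCast_iff, Nat.ModEq.comm,
    Nat.modEq_iff_dvd' hA]

theorem natCast_dvd_of_mul_eq_zero {N a b : ℕ} [NeZero N] (hab : a * b = N) {m : ZMod N}
    (hm : (a : ZMod N) * m = 0) : (b : ZMod N) ∣ m := by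
  have ha : 0 < a := Nat.pos_of_ne_zero fun ha => NeZero.ne N (by simp [← hab, ha])
  have hdvd : a * b ∣ a * m.val := by
    rw [hab, ← natCast_eq_zero_iff, Nat.cast_mul, natCast_zmod_val]
    exact hm
  obtain ⟨y, hy⟩ := Nat.dvd_of_mul_dvd_mul_left ha hdvd
  exact ⟨y, by rw [← natCast_zmod_val m, hy, Nat.cast_mul]⟩

theorem associated_pow_padicValNat {p n c : ℕ} [hp : Fact p.Prime] (hc : c ≠ 0) :
    Associated ((p : ZMod (p ^ n)) ^ padicValNat p c) (c : ZMod (p ^ n)) := by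
  rw [← Nat.factorization_def c hp.out]
  have hcop : (ordCompl[p] c).Coprime (p ^ n) := (Nat.coprime_ordCompl hp.out hc).symm.pow_right n
  refine ⟨unitOfCoprime _ hcop, ?_⟩
  rw [coe_unitOfCoprime, ← Nat.cast_pow, ← Nat.cast_mul, Nat.ordProj_mul_ordCompl_eq_self]

theorem natCast_dvd_of_mul_eq_zero_of_padicValNat_add_le {p n c s : ℕ} [Fact p.Prime]
    (hc : c ≠ 0) (hs : s ≠ 0) (hcs : padicValNat p c + padicValNat p s ≤ n) {m : ZMod (p ^ n)}
    (hm : (c : ZMod (p ^ n)) * m = 0) : (s : ZMod (p ^ n)) ∣ m := by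
  have hpm : (p : ZMod (p ^ n)) ^ padicValNat p c * m = 0 :=
    ((associated_pow_padicValNat hc).mul_right m).eq_zero_iff.mpr hm
  calc (s : ZMod (p ^ n)) ∣ (p : ZMod (p ^ n)) ^ padicValNat p s :=
        (associated_pow_padicValNat hs).symm.dvd
    _ ∣ (p : ZMod (p ^ n)) ^ (n - padicValNat p c) := pow_dvd_pow _ (by omega)
    _ ∣ m := by
      have hN : p ^ padicValNat p c * p ^ (n - padicValNat p c) = p ^ n := by
        rw [← pow_add, Nat.add_sub_cancel' (by omega)]
      exact_mod_cast natCast_dvd_of_mul_eq_zero hN (by exact_mod_cast hpm)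

theorem geom_sum_dvd_of_sub_one_mul_eq_zero {p n A d : ℕ} [Fact p.Prime] (hA : 2 ≤ A)
    (hd : d ≠ 0) (hval : padicValNat p (A ^ d - 1) ≤ n) {m : ZMod (p ^ n)}
    (hm : ((A : ZMod (p ^ n)) - 1) * m = 0) :
    (∑ j ∈ range d, (A : ZMod (p ^ n)) ^ j) ∣ m := by
  have hgeom : (A - 1) * ∑ j ∈ range d, A ^ j = A ^ d - 1 := by
    have := geom_sum_mul_add (A - 1) d
    rw [Nat.sub_add_cancel (by omega), mul_comm] at this
    omega
  have hpow : A ^ d - 1 ≠ 0 := by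
    have := Nat.one_lt_pow hd (by omega : 1 < A)
    omega
  have hsum : ∑ j ∈ range d, A ^ j ≠ 0 := fun h => hpow (by rw [← hgeom, h, mul_zero])
  have hdvd := natCast_dvd_of_mul_eq_zero_of_padicValNat_add_le (c := A - 1) (by omega) hsum
    (by rwa [← padicValNat.mul (by omega) hsum, hgeom]) (m := m)
    (by rwa [Nat.cast_sub (by omega : 1 ≤ A), Nat.cast_one])
  simpa using hdvd

end ZMod

theorem padicValNat_sub_one_lt_of_natCast_ne_one {p n A : ℕ} [Fact p.Prime] (hA : 1 ≤ A)
    (hA1 : (A : ZMod (p ^ n)) ≠ 1) : padicValNat p (A - 1) < n := by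
  by_contra! h
  exact hA1 <| (ZMod.natCast_eq_one_iff_dvd_sub_one hA).mpr <|
    (pow_dvd_pow p h).trans pow_padicValNat_dvd

theorem padicValNat_pow_orderOf_sub_one_le {p n A c : ℕ} [hp : Fact p.Prime] (hA : 2 ≤ A)
    (hcn : c < n) (hlte : ∀ k, 1 ≤ k → padicValNat p (A ^ p ^ k - 1) = c + k)
    (hA1 : (A : ZMod (p ^ n)) ≠ 1) :
    padicValNat p (A ^ orderOf (A : ZMod (p ^ n)) - 1) ≤ n := by
  have hpow_sub_one : ∀ N, N ≠ 0 → A ^ N - 1 ≠ 0 := fun N hN => by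
    have := Nat.one_lt_pow hN (by omega : 1 < A)
    omega
  -- `A ^ p ^ (n - c) ≡ 1`, so the order of `A` is some `p ^ k` with `c + k ≤ n`
  have hord : orderOf (A : ZMod (p ^ n)) ∣ p ^ (n - c) := by
    apply orderOf_dvd_of_pow_eq_one
    rw [← Nat.cast_pow, ZMod.natCast_eq_one_iff_dvd_sub_one (Nat.one_le_pow _ _ (by omega)),
      padicValNat_dvd_iff_le (hpow_sub_one _ (pow_ne_zero _ hp.out.ne_zero)), hlte _ (by omega)]
    omega
  obtain ⟨k, hk, hdk⟩ := (Nat.dvd_prime_pow hp.out).mp hord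
  have hk0 : k ≠ 0 := by
    rintro rfl
    exact hA1 (orderOf_eq_one_iff.mp (by simpa using hdk))
  rw [hdk, hlte k (by omega)]
  omega

theorem padicValNat_pow_orderOf_sub_one_le_of_odd {p n A : ℕ} [hp : Fact p.Prime] (hp2 : Odd p)
    (hA : 2 ≤ A) (hpA : p ∣ A - 1) (hA1 : (A : ZMod (p ^ n)) ≠ 1) :
    padicValNat p (A ^ orderOf (A : ZMod (p ^ n)) - 1) ≤ n := by
  have hpA' : ¬ p ∣ A := fun h => hp.out.one_lt.ne' <| Nat.dvd_one.mp <| by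
    simpa [Nat.sub_sub_self (by omega : 1 ≤ A)] using Nat.dvd_sub h hpA
  refine padicValNat_pow_orderOf_sub_one_le hA
    (padicValNat_sub_one_lt_of_natCast_ne_one (by omega) hA1) (fun k _ => ?_) hA1
  simpa using padicValNat.pow_sub_pow hp2 (y := 1) (by omega) (by simpa using hpA) hpA'
    (pow_ne_zero k hp.out.ne_zero)

theorem padicValNat_two_pow_orderOf_sub_one_le {n A : ℕ} (hA : 2 ≤ A) (h2A : 2 ∣ A - 1)
    (hA1 : (A : ZMod (2 ^ n)) ≠ 1) (hAneg : (A : ZMod (2 ^ n)) ≠ -1) :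
    padicValNat 2 (A ^ orderOf (A : ZMod (2 ^ n)) - 1) ≤ n := by
  have hsub : padicValNat 2 (A - 1) < n := padicValNat_sub_one_lt_of_natCast_ne_one (by omega) hA1
  have hadd : padicValNat 2 (A + 1) < n := by
    by_contra! h
    refine hAneg (eq_neg_of_add_eq_zero_left ?_)
    exact_mod_cast (ZMod.natCast_eq_zero_iff _ _).mpr ((pow_dvd_pow 2 h).trans pow_padicValNat_dvd)
  have two_le_iff : ∀ {x}, x ≠ 0 → (2 ≤ padicValNat 2 x ↔ 4 ∣ x) := fun hx =>
    (padicValNat_dvd_iff_le hx).symm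
  have hsub1 : 1 ≤ padicValNat 2 (A - 1) := one_le_padicValNat_of_dvd (by omega) h2A
  -- `A - 1` and `A + 1` differ by 2, so one of them is `2 mod 4`
  have hmin : padicValNat 2 (A - 1) < 2 ∨ padicValNat 2 (A + 1) < 2 := by
    by_contra! h
    rw [two_le_iff (by omega), two_le_iff (by omega)] at h
    omega
  refine padicValNat_pow_orderOf_sub_one_le
    (c := padicValNat 2 (A - 1) + padicValNat 2 (A + 1) - 1) hA (by omega) (fun k hk => ?_) hA1
  have := padicValNat.pow_two_sub_pow (x := A) (y := 1) (by omega) (by simpa using h2A) (by omega)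
    (pow_ne_zero k two_ne_zero) ((Nat.even_pow' (by omega)).mpr even_two)
  simp only [one_pow, padicValNat.prime_pow] at this
  omega

theorem ZMod.geom_sum_orderOf_dvd {p n A : ℕ} [hp : Fact p.Prime] (hA : A.Coprime (p ^ n))
    (hexc : p ≠ 2 ∨ ¬((A : ZMod (p ^ n)) = -1 ∧ orderOf (A : ZMod (p ^ n)) = 2))
    {m : ZMod (p ^ n)} (hm : ((A : ZMod (p ^ n)) - 1) * m = 0) :
    (∑ j ∈ range (orderOf (A : ZMod (p ^ n))), (A : ZMod (p ^ n)) ^ j) ∣ m := by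
  by_cases ha1 : (A : ZMod (p ^ n)) = 1
  · simp [ha1]
  have hA0 : A ≠ 0 := by
    rintro rfl
    have := ZMod.subsingleton_iff.mpr ((Nat.coprime_zero_left _).mp hA)
    exact ha1 (Subsingleton.elim _ _)
  by_cases hpA : p ∣ A - 1
  · have hA2 : 2 ≤ A := by
      by_contra! h
      exact ha1 (by rw [show A = 1 by omega, Nat.cast_one])
    have hd0 : orderOf (A : ZMod (p ^ n)) ≠ 0 := by
      rw [← ZMod.coe_unitOfCoprime A hA, orderOf_units]
      exact (orderOf_pos _).ne'
    refine ZMod.geom_sum_dvd_of_sub_one_mul_eq_zero hA2 hd0 ?_ hm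
    rcases hp.out.eq_two_or_odd' with rfl | hodd
    · refine padicValNat_two_pow_orderOf_sub_one_le hA2 hpA ha1 fun hneg => ?_
      exact hexc.resolve_left (not_not.mpr rfl)
        ⟨hneg, orderOf_eq_prime (by rw [hneg, neg_one_sq]) ha1⟩
    · exact padicValNat_pow_orderOf_sub_one_le_of_odd hodd hA2 hpA ha1
  · have hunit : IsUnit ((A - 1 : ℕ) : ZMod (p ^ n)) :=
      (ZMod.isUnit_iff_coprime _ _).mpr ((hp.out.coprime_iff_not_dvd.mpr hpA).symm.pow_right n)
    rw [Nat.cast_sub (by omega), Nat.cast_one] at hunit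
    rw [hunit.mul_right_eq_zero.mp hm]
    exact dvd_zero _

theorem stmt_13_general (p q i n : ℕ) (hp : p.Prime)
    (hcop : Nat.Coprime (q ^ i) (p ^ n))
    (hexc : p ≠ 2 ∨
      ¬((q : ZMod (p ^ n)) ^ i = -1 ∧
        orderOf (ZMod.unitOfCoprime (q ^ i) hcop : (ZMod (p ^ n))ˣ) = 2)) :
    let d := orderOf (ZMod.unitOfCoprime (q ^ i) hcop : (ZMod (p ^ n))ˣ)
    -- the action by multiplication by `q^i` is faithful of order exactly `d`
    (∀ j : ℕ, 0 < j → j < d → ((q : ZMod (p ^ n)) ^ i) ^ j ≠ 1) ∧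
    -- surjectivity of the norm onto the invariants
    (∀ m : ZMod (p ^ n), ((q : ZMod (p ^ n)) ^ i - 1) * m = 0 →
      ∃ x : ZMod (p ^ n),
        (∑ j ∈ Finset.range d, ((q : ZMod (p ^ n)) ^ i) ^ j) * x = m) := by
  intro d
  have : Fact p.Prime := ⟨hp⟩
  have hd : d = orderOf ((q ^ i : ℕ) : ZMod (p ^ n)) := by
    rw [← ZMod.coe_unitOfCoprime _ hcop, orderOf_units]
  change p ≠ 2 ∨ ¬(_ ∧ d = 2) at hexc
  rw [← Nat.cast_pow, hd] at hexc ⊢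
  exact ⟨fun j hj hjd => pow_ne_one_of_lt_orderOf hj.ne' hjd,
    fun m hm => (ZMod.geom_sum_orderOf_dvd hcop hexc hm).imp fun x hx => hx.symm⟩

/-- Let `q` be coprime to the prime `p`, `n, i ≥ 1`, and let `d` be the multiplicative order
of `q^i` modulo `p^n`. The cyclic group `ℤ/d` acts faithfully on `M = ℤ/p^n` by
multiplication by `q^i`, and if `p` is odd (or `p = 2` and we are not in the case `d = 2`
acting by `−1`, i.e. `q^i ≡ −1`), the norm map `M_G → M^G`, given by multiplication by
`1 + q^i + ⋯ + q^{(d−1)i}`, is surjective onto `M^G = {m : (q^i − 1)m = 0}`. -/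
theorem stmt_13 (p q i n : ℕ) (hp : p.Prime) (hn : 1 ≤ n) (hi : 1 ≤ i)
    (hcop : Nat.Coprime (q ^ i) (p ^ n))
    (hexc : p ≠ 2 ∨
      ¬((q : ZMod (p ^ n)) ^ i = -1 ∧
        orderOf (ZMod.unitOfCoprime (q ^ i) hcop : (ZMod (p ^ n))ˣ) = 2)) :
    let d := orderOf (ZMod.unitOfCoprime (q ^ i) hcop : (ZMod (p ^ n))ˣ)
    -- the action by multiplication by `q^i` is faithful of order exactly `d`
    (∀ j : ℕ, 0 < j → j < d → ((q : ZMod (p ^ n)) ^ i) ^ j ≠ 1) ∧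
    -- surjectivity of the norm onto the invariants
    (∀ m : ZMod (p ^ n), ((q : ZMod (p ^ n)) ^ i - 1) * m = 0 →
      ∃ x : ZMod (p ^ n),
        (∑ j ∈ Finset.range d, ((q : ZMod (p ^ n)) ^ i) ^ j) * x = m) :=
  stmt_13_general p q i n hp hcop hexc
end
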